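/- arXiv:1503.02331 — 2 statements merged into one kernel-verified Lean document; each statement's English description precedes it below -/
import Mathlib

section
/- Assume the TRI hypothesis. Then for every t ≠ 0 one has Σ^t = -e^{itH}·V·(Σ^t)ᵀ·V*·e^{-itH}. Consequently the spectrum of the Hermitian matrix Σ^t is symmetric with respect to 0, with equal multiplicities: for every φ ∈ ℝ, dim ker(Σ^t - φ·I) = dim ker(Σ^t + φ·I). -/
open Matrix MeasureTheory Filter Topology
open scoped ComplexOrder

/-- Functional calculus for a Hermitian complex matrix: apply `f : ℝ → ℝ` to the eigenvalues
(junk value `0` if the matrix is not Hermitian). -/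
noncomputable def matCFC {n : ℕ} (f : ℝ → ℝ) (A : Matrix (Fin n) (Fin n) ℂ) :
    Matrix (Fin n) (Fin n) ℂ :=
  if h : A.IsHermitian then h.cfc f else 0

/-- Functional-calculus logarithm of a (positive-definite Hermitian) matrix. -/
noncomputable def mlog {n : ℕ} (A : Matrix (Fin n) (Fin n) ℂ) : Matrix (Fin n) (Fin n) ℂ :=
  matCFC Real.log A

/-- Functional-calculus real power of a (positive-definite Hermitian) matrix. -/
noncomputable def mpow {n : ℕ} (A : Matrix (Fin n) (Fin n) ℂ) (q : ℝ) :
    Matrix (Fin n) (Fin n) ℂ :=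
  matCFC (fun x => x ^ q) A

/-- Matrix exponential. -/
noncomputable def mexp {n : ℕ} (A : Matrix (Fin n) (Fin n) ℂ) : Matrix (Fin n) (Fin n) ℂ :=
  NormedSpace.exp A

/-- Heisenberg evolution `τ^t(A) = e^{itH} A e^{-itH}`. -/
noncomputable def heisenberg {n : ℕ} (H : Matrix (Fin n) (Fin n) ℂ) (t : ℝ)
    (A : Matrix (Fin n) (Fin n) ℂ) : Matrix (Fin n) (Fin n) ℂ :=
  mexp ((Complex.I * t) • H) * A * mexp ((-(Complex.I * t)) • H)

/-- Schrödinger evolution of the state, `ω_t = e^{-itH} ω e^{itH}`. -/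
noncomputable def stateT {n : ℕ} (H ω : Matrix (Fin n) (Fin n) ℂ) (t : ℝ) :
    Matrix (Fin n) (Fin n) ℂ :=
  mexp ((-(Complex.I * t)) • H) * ω * mexp ((Complex.I * t) • H)

/-- Entropy production observable `σ = -i (H log ω - log ω H)`. -/
noncomputable def entropyProd {n : ℕ} (H ω : Matrix (Fin n) (Fin n) ℂ) :
    Matrix (Fin n) (Fin n) ℂ :=
  (-Complex.I) • (H * mlog ω - mlog ω * H)

/-- `σ_s = τ^s(σ)`. -/
noncomputable def sigmaAt {n : ℕ} (H ω : Matrix (Fin n) (Fin n) ℂ) (s : ℝ) :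
    Matrix (Fin n) (Fin n) ℂ :=
  heisenberg H s (entropyProd H ω)

/-- `∫₀^t σ_s ds` (entrywise integral). -/
noncomputable def intSigma {n : ℕ} (H ω : Matrix (Fin n) (Fin n) ℂ) (t : ℝ) :
    Matrix (Fin n) (Fin n) ℂ :=
  Matrix.of fun i j => ∫ s in (0:ℝ)..t, sigmaAt H ω s i j

/-- Mean entropy production rate `Σ^t = (1/t) ∫₀^t σ_s ds`. -/
noncomputable def meanSigma {n : ℕ} (H ω : Matrix (Fin n) (Fin n) ℂ) (t : ℝ) :
    Matrix (Fin n) (Fin n) ℂ :=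
  ((t : ℂ)⁻¹) • intSigma H ω t

/-- The Evans–Searles functional `ES_t(α) = log tr(ω e^{-α ∫₀^t σ_s ds})`. -/
noncomputable def ES {n : ℕ} (H ω : Matrix (Fin n) (Fin n) ℂ) (t α : ℝ) : ℝ :=
  Real.log ((Matrix.trace (ω * mexp ((-α) • intSigma H ω t))).re)

/-- The entropic pressure functional `e_{p,t}(α)` for `0 < p < ∞`. -/
noncomputable def ePressure {n : ℕ} (H ω : Matrix (Fin n) (Fin n) ℂ) (p t α : ℝ) : ℝ :=
  Real.log ((Matrix.trace (mpow
    (mpow ω ((1 - α)/p) * mpow (stateT H ω t) (2*α/p) * mpow ω ((1 - α)/p)) (p/2))).re)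

/-- The entropic pressure functional `e_{∞,t}(α)`. -/
noncomputable def ePressureInf {n : ℕ} (H ω : Matrix (Fin n) (Fin n) ℂ) (t α : ℝ) : ℝ :=
  Real.log ((Matrix.trace (mexp ((1 - α) • mlog ω + α • mlog (stateT H ω t)))).re)

/-!
The antiunitary time reversal `Θ(A) = V Ā Vᴴ` is a real star-algebra homomorphism, so it commutes
with the continuous functional calculus, and on Hermitian matrices it is `A ↦ V Aᵀ Vᴴ`. Hence
time-reversal invariance gives `V (log ω)ᵀ Vᴴ = log ω` and `V (e^{zH})ᵀ Vᴴ = e^{zH}`. As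
`A ↦ V Aᵀ Vᴴ` reverses products, it sends the commutator `σ` to `-σ` and `σ_s` to `-σ_{-s}`, so
`τ^t (V σ_sᵀ Vᴴ) = -σ_{t-s}`; integrating over `[0, t]` and substituting `s ↦ t - s` gives
`Σ^t = -P (Σ^t)ᵀ P⁻¹` with `P = e^{itH} V`. Then `Σ^t - φ = -P (Σ^t + φ)ᵀ P⁻¹` has the rank of
`Σ^t + φ`, and rank–nullity turns this into equal kernel dimensions.
-/

section TimeReversal

variable {m : Type*} [Fintype m] [DecidableEq m] {V : Matrix m m ℂ}

noncomputable def entrywiseConj : Matrix m m ℂ →⋆ₐ[ℝ] Matrix m m ℂ :=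
  { Complex.conjAe.toAlgHom.mapMatrix with
    map_star' := fun A => by ext; simp }

noncomputable def timeReversal (hV : V ∈ unitaryGroup m ℂ) : Matrix m m ℂ →⋆ₐ[ℝ] Matrix m m ℂ :=
  (Unitary.conjStarAlgAut ℝ (Matrix m m ℂ) ⟨V, hV⟩ : Matrix m m ℂ →⋆ₐ[ℝ] Matrix m m ℂ).comp
    entrywiseConj

lemma timeReversal_apply_of_isHermitian (hV : V ∈ unitaryGroup m ℂ) {A : Matrix m m ℂ}
    (hA : A.IsHermitian) : timeReversal hV A = V * Aᵀ * Vᴴ := by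
  conv_rhs => rw [← hA.eq]
  rfl

lemma continuous_timeReversal (hV : V ∈ unitaryGroup m ℂ) : Continuous (timeReversal hV) :=
  LinearMap.continuous_of_finiteDimensional (timeReversal hV).toAlgHom.toLinearMap

lemma transpose_conj_mul (hV : V ∈ unitaryGroup m ℂ) (A B : Matrix m m ℂ) :
    V * (A * B)ᵀ * Vᴴ = (V * Bᵀ * Vᴴ) * (V * Aᵀ * Vᴴ) := by
  have hV' : Vᴴ * V = 1 := mem_unitaryGroup_iff'.mp hV
  simp only [transpose_mul, Matrix.mul_assoc]
  rw [← Matrix.mul_assoc Vᴴ V, hV', Matrix.one_mul]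

lemma transpose_conj_cfc (hV : V ∈ unitaryGroup m ℂ) {A : Matrix m m ℂ} (hA : A.IsHermitian)
    (hVA : V * Aᵀ * Vᴴ = A) (f : ℝ → ℝ) : V * (cfc f A)ᵀ * Vᴴ = cfc f A := by
  have hΘA : timeReversal hV A = A := by rw [timeReversal_apply_of_isHermitian hV hA, hVA]
  have := (timeReversal hV).map_cfc f A ((Matrix.finite_real_spectrum (A := A)).continuousOn _)
    (continuous_timeReversal hV) hA (by rw [hΘA]; exact hA)
  rwa [hΘA, timeReversal_apply_of_isHermitian hV (cfc_predicate f A)] at this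

lemma transpose_conj_exp (hV : V ∈ unitaryGroup m ℂ) {A : Matrix m m ℂ}
    (hVA : V * Aᵀ * Vᴴ = A) : V * (NormedSpace.exp A)ᵀ * Vᴴ = NormedSpace.exp A := by
  have hVinv : V⁻¹ = Vᴴ := Matrix.inv_eq_right_inv (mem_unitaryGroup_iff.mp hV)
  rw [← Matrix.exp_transpose, ← hVinv,
    ← Matrix.exp_conj V _ (IsUnit.of_mul_eq_one _ (mem_unitaryGroup_iff.mp hV)), hVinv, hVA]

end TimeReversal

lemma map_of_intervalIntegral {m : Type*} [Fintype m]
    (L : Matrix m m ℂ →ₗ[ℂ] Matrix m m ℂ) {f : ℝ → Matrix m m ℂ} (hf : Continuous f) (a b : ℝ) :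
    L (of fun i j => ∫ s in a..b, f s i j) = of fun i j => ∫ s in a..b, L (f s) i j := by
  -- any norm on matrices identifies the entrywise integral with the Bochner integral
  let _ : NormedAddCommGroup (Matrix m m ℂ) := Matrix.normedAddCommGroup
  let _ : NormedSpace ℂ (Matrix m m ℂ) := Matrix.normedSpace
  have entrywise : ∀ g : ℝ → Matrix m m ℂ, Continuous g →
      (of fun i j => ∫ s in a..b, g s i j) = ∫ s in a..b, g s := fun g hg => by
    ext i j
    exact ((entryLinearMap ℂ ℂ i j).toContinuousLinearMap.intervalIntegral_comp_comm
      (hg.intervalIntegrable a b))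
  rw [entrywise f hf, entrywise (fun s => L (f s)) (L.continuous_of_finiteDimensional.comp hf)]
  exact (L.toContinuousLinearMap.intervalIntegral_comp_comm (hf.intervalIntegrable a b)).symm

lemma rank_add_finrank_ker_mulVecLin {K m : Type*} [Field K] [Fintype m] (A : Matrix m m K) :
    A.rank + Module.finrank K (LinearMap.ker A.mulVecLin) = Fintype.card m := by
  rw [Matrix.rank, LinearMap.finrank_range_add_finrank_ker, Module.finrank_fintype_fun_eq_card]

lemma finrank_ker_sub_smul_one_eq_add {K m : Type*} [Field K] [Fintype m] [DecidableEq m]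
    {M P Q : Matrix m m K} (hPQ : P * Q = 1) (hM : M = -(P * Mᵀ * Q)) (c : K) :
    Module.finrank K (LinearMap.ker (M - c • 1).mulVecLin)
      = Module.finrank K (LinearMap.ker (M + c • 1).mulVecLin) := by
  have hP : IsUnit (-P).det := by
    rw [← isUnit_iff_isUnit_det]; exact (IsUnit.of_mul_eq_one Q hPQ).neg
  have hQ : IsUnit Q.det := by
    rw [← isUnit_iff_isUnit_det]; exact IsUnit.of_mul_eq_one_right P hPQ
  have hsub : M - c • 1 = -P * (M + c • 1)ᵀ * Q := by
    rw [transpose_add, transpose_smul, transpose_one, neg_mul, neg_mul, Matrix.mul_add,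
      Matrix.add_mul, mul_smul_comm, Matrix.mul_one, smul_mul_assoc, hPQ, neg_add, ← hM,
      sub_eq_add_neg]
  have hrank : (M - c • 1).rank = (M + c • 1).rank := by
    rw [hsub, rank_mul_eq_left_of_isUnit_det Q _ hQ, rank_mul_eq_right_of_isUnit_det (-P) _ hP,
      rank_transpose]
  have := rank_add_finrank_ker_mulVecLin (M - c • 1)
  have := rank_add_finrank_ker_mulVecLin (M + c • 1)
  omega

section EntropyProduction

variable {n : ℕ} {H ω V : Matrix (Fin n) (Fin n) ℂ}

lemma mexp_add_smul (H : Matrix (Fin n) (Fin n) ℂ) (a b : ℂ) :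
    mexp ((a + b) • H) = mexp (a • H) * mexp (b • H) := by
  rw [mexp, mexp, mexp, add_smul]
  exact Matrix.exp_add_of_commute _ _ (((Commute.refl H).smul_left a).smul_right b)

lemma heisenberg_heisenberg (H : Matrix (Fin n) (Fin n) ℂ) (t s : ℝ)
    (A : Matrix (Fin n) (Fin n) ℂ) :
    heisenberg H t (heisenberg H s A) = heisenberg H (t + s) A := by
  have hadd : ∀ a b : ℂ, mexp (a • H) * mexp (b • H) = mexp ((a + b) • H) :=
    fun a b => (mexp_add_smul H a b).symm
  simp only [heisenberg, ← Matrix.mul_assoc, hadd]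
  rw [Matrix.mul_assoc _ _ (mexp _), hadd]
  push_cast
  ring_nf

lemma heisenberg_neg (H : Matrix (Fin n) (Fin n) ℂ) (t : ℝ) (A : Matrix (Fin n) (Fin n) ℂ) :
    heisenberg H t (-A) = -heisenberg H t A := by
  simp only [heisenberg, Matrix.mul_neg, Matrix.neg_mul]

lemma heisenberg_smul (H : Matrix (Fin n) (Fin n) ℂ) (t : ℝ) (c : ℂ)
    (A : Matrix (Fin n) (Fin n) ℂ) :
    heisenberg H t (c • A) = c • heisenberg H t A := by
  simp only [heisenberg, Matrix.mul_smul, Matrix.smul_mul]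

lemma continuous_mexp_smul (H : Matrix (Fin n) (Fin n) ℂ) {f : ℝ → ℂ} (hf : Continuous f) :
    Continuous fun s => mexp (f s • H) := by
  let _ : NormedRing (Matrix (Fin n) (Fin n) ℂ) := Matrix.linftyOpNormedRing
  let _ : NormedAlgebra ℂ (Matrix (Fin n) (Fin n) ℂ) := Matrix.linftyOpNormedAlgebra
  let _ : NormedAlgebra ℚ (Matrix (Fin n) (Fin n) ℂ) := NormedAlgebra.restrictScalars ℚ ℂ _
  exact NormedSpace.exp_continuous.comp (hf.smul continuous_const)

lemma continuous_heisenberg (H A : Matrix (Fin n) (Fin n) ℂ) :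
    Continuous fun s => heisenberg H s A :=
  ((continuous_mexp_smul H (by fun_prop)).matrix_mul continuous_const).matrix_mul
    (continuous_mexp_smul H (by fun_prop))

variable (hV : V ∈ unitaryGroup (Fin n) ℂ) (hVH : V * Hᵀ * Vᴴ = H)
include hV hVH

lemma transpose_conj_mexp_smul (a : ℂ) : V * (mexp (a • H))ᵀ * Vᴴ = mexp (a • H) :=
  transpose_conj_exp hV (by rw [transpose_smul, mul_smul_comm, smul_mul_assoc, hVH])

lemma transpose_conj_heisenberg (s : ℝ) (A : Matrix (Fin n) (Fin n) ℂ) :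
    V * (heisenberg H s A)ᵀ * Vᴴ = heisenberg H (-s) (V * Aᵀ * Vᴴ) := by
  rw [heisenberg, transpose_conj_mul hV, transpose_conj_mul hV, transpose_conj_mexp_smul hV hVH,
    transpose_conj_mexp_smul hV hVH, heisenberg]
  push_cast
  simp only [mul_neg, neg_neg, Matrix.mul_assoc]

variable (hω : ω.IsHermitian) (hVω : V * ωᵀ * Vᴴ = ω)
include hω hVω

lemma transpose_conj_entropyProd : V * (entropyProd H ω)ᵀ * Vᴴ = -entropyProd H ω := by
  have hlog : V * (mlog ω)ᵀ * Vᴴ = mlog ω := by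
    rw [mlog, matCFC, dif_pos hω, ← hω.cfc_eq]
    exact transpose_conj_cfc hV hω hVω Real.log
  rw [entropyProd, transpose_smul, mul_smul_comm, smul_mul_assoc, transpose_sub, Matrix.mul_sub,
    Matrix.sub_mul, transpose_conj_mul hV, transpose_conj_mul hV, hlog, hVH, ← smul_neg, neg_sub]

lemma transpose_conj_sigmaAt (s : ℝ) : V * (sigmaAt H ω s)ᵀ * Vᴴ = -sigmaAt H ω (-s) := by
  rw [sigmaAt, transpose_conj_heisenberg hV hVH, transpose_conj_entropyProd hV hVH hω hVω,
    heisenberg_neg, sigmaAt]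

lemma heisenberg_transpose_conj_intSigma (t : ℝ) :
    heisenberg H t (V * (intSigma H ω t)ᵀ * Vᴴ) = -intSigma H ω t := by
  let L : Matrix (Fin n) (Fin n) ℂ →ₗ[ℂ] Matrix (Fin n) (Fin n) ℂ :=
    { toFun := fun A => heisenberg H t (V * Aᵀ * Vᴴ)
      map_add' := fun A B => by
        simp only [heisenberg, transpose_add, Matrix.mul_add, Matrix.add_mul]
      map_smul' := fun c A => by
        simp only [heisenberg, transpose_smul, Matrix.mul_smul, Matrix.smul_mul,
          RingHom.id_apply] }
  have hL : ∀ s, L (sigmaAt H ω s) = -sigmaAt H ω (t - s) := fun s => by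
    change heisenberg H t _ = _
    rw [transpose_conj_sigmaAt hV hVH hω hVω, heisenberg_neg, sigmaAt, sigmaAt,
      heisenberg_heisenberg, sub_eq_add_neg]
  calc heisenberg H t (V * (intSigma H ω t)ᵀ * Vᴴ) = L (intSigma H ω t) := rfl
    _ = of fun i j => ∫ s in (0 : ℝ)..t, L (sigmaAt H ω s) i j :=
      map_of_intervalIntegral L (continuous_heisenberg H _) 0 t
    _ = -intSigma H ω t := by
      ext i j
      simp only [hL, Matrix.neg_apply, of_apply, intervalIntegral.integral_neg, intSigma]
      rw [intervalIntegral.integral_comp_sub_left (fun s => sigmaAt H ω s i j), sub_self,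
        sub_zero]

end EntropyProduction

theorem stmt3_general {n : ℕ} (H ω V : Matrix (Fin n) (Fin n) ℂ)
    (hω : ω.PosDef)
    (hV : V * Vᴴ = 1) (hV' : Vᴴ * V = 1)
    (hTRIH : V * Hᵀ * Vᴴ = H) (hTRIω : V * ωᵀ * Vᴴ = ω)
    (t : ℝ) :
    meanSigma H ω t
      = -(mexp ((Complex.I * t) • H) * V * (meanSigma H ω t)ᵀ * Vᴴ *
          mexp ((-(Complex.I * t)) • H)) ∧
    ∀ φ : ℝ,
      Module.finrank ℂ
          (LinearMap.ker (Matrix.mulVecLin (meanSigma H ω t - (φ : ℂ) • 1)))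
        = Module.finrank ℂ
          (LinearMap.ker (Matrix.mulVecLin (meanSigma H ω t + (φ : ℂ) • 1))) := by
  have hVU : V ∈ unitaryGroup (Fin n) ℂ := ⟨hV', hV⟩
  have hreversal : meanSigma H ω t = -heisenberg H t (V * (meanSigma H ω t)ᵀ * Vᴴ) := by
    rw [meanSigma, transpose_smul, mul_smul_comm, smul_mul_assoc, heisenberg_smul,
      heisenberg_transpose_conj_intSigma hVU hTRIH hω.isHermitian hTRIω, smul_neg, neg_neg]
  have hPQ : mexp ((Complex.I * t) • H) * V * (Vᴴ * mexp ((-(Complex.I * t)) • H)) = 1 := by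
    rw [Matrix.mul_assoc, ← Matrix.mul_assoc V, hV, Matrix.one_mul, ← mexp_add_smul,
      add_neg_cancel, zero_smul, mexp, NormedSpace.exp_zero]
  have hconj : meanSigma H ω t = -(mexp ((Complex.I * t) • H) * V * (meanSigma H ω t)ᵀ *
      (Vᴴ * mexp ((-(Complex.I * t)) • H))) := by
    simpa only [heisenberg, Matrix.mul_assoc] using hreversal
  exact ⟨by simpa only [Matrix.mul_assoc] using hconj,
    fun φ => finrank_ker_sub_smul_one_eq_add hPQ hconj φ⟩

/-- under time-reversal invariance, `Σ^t = -e^{itH} V (Σ^t)ᵀ V* e^{-itH}` for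
`t ≠ 0`, and the spectrum of `Σ^t` is symmetric about `0` with equal multiplicities. -/
theorem stmt3 {n : ℕ} (H ω V : Matrix (Fin n) (Fin n) ℂ)
    (hH : H.IsHermitian) (hω : ω.PosDef) (htr : ω.trace = 1)
    (hV : V * Vᴴ = 1) (hV' : Vᴴ * V = 1)
    (hTRIH : V * Hᵀ * Vᴴ = H) (hTRIω : V * ωᵀ * Vᴴ = ω)
    (t : ℝ) (ht : t ≠ 0) :
    meanSigma H ω t
      = -(mexp ((Complex.I * t) • H) * V * (meanSigma H ω t)ᵀ * Vᴴ *
          mexp ((-(Complex.I * t)) • H)) ∧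
    ∀ φ : ℝ,
      Module.finrank ℂ
          (LinearMap.ker (Matrix.mulVecLin (meanSigma H ω t - (φ : ℂ) • 1)))
        = Module.finrank ℂ
          (LinearMap.ker (Matrix.mulVecLin (meanSigma H ω t + (φ : ℂ) • 1))) :=
  stmt3_general H ω V hω hV hV' hTRIH hTRIω t
end

section
/- Assume the TRI hypothesis. Then for every p ∈ (0,∞), every t ∈ ℝ and every α ∈ ℝ: e_{p,t}(α) = e_{p,t}(1-α) and e_{p,t}(α) = e_{p,-t}(α); the same two identities hold for e_{∞,t}. -/
open Matrix MeasureTheory Filter Topology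
open scoped ComplexOrder

/-!
Let `Φ(A) = V Aᵀ V*` and `U_t = e^{itH}`. Both pressures are `log Re F_α(ω, ω_t)` for a trace
functional `F_α(A, B)` of the pair `(A, B)` with three symmetries: it is invariant under a joint
unitary conjugation `(A, B) ↦ (uAu*, uBu*)` and under a joint transpose `(A, B) ↦ (Aᵀ, Bᵀ)` (for
`e_p` because `ω^a ω_t^b ω^a` is a palindrome, so the reversal of products by `ᵀ` is harmless), and
`F_α(A, B) = F_{1-α}(B, A)`. For `e_∞` the last one is commutativity of addition; for `e_p` it is
`tr f(X*X) = tr f(XX*)` with `X = B^{α/p} A^{(1-α)/p}`.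

Time-reversal invariance gives `Φ(ω) = ω` and, as `Φ` reverses products and fixes `H`,
`Φ(ω_t) = ω_{-t}`; with the first two symmetries this yields `e_t(α) = e_{-t}(α)`.
Swapping, then conjugating by `U_t`, which sends `(ω_t, ω)` to `(ω, ω_{-t})`, gives
`e_t(α) = e_{-t}(1-α)`;
combining the two gives `e_t(α) = e_t(1-α)`.
-/

open Polynomial

lemma Polynomial.exists_eqOn_of_finite (f : ℝ → ℝ) {s : Set ℝ} (hs : s.Finite) :
    ∃ q : ℝ[X], s.EqOn (fun x => q.eval x) f :=
  ⟨Lagrange.interpolate hs.toFinset id f, fun x hx => by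
    simpa using
      Lagrange.eval_interpolate_at_node (r := f) (Set.injOn_id _) (hs.mem_toFinset.mpr hx)⟩

namespace Matrix

variable {m 𝕜 : Type*} [Fintype m] [DecidableEq m]

lemma trace_pow_mul_comm {R : Type*} [CommSemiring R] (A B : Matrix m m R) (k : ℕ) :
    trace ((A * B) ^ k) = trace ((B * A) ^ k) := by
  cases k with
  | zero => rfl
  | succ k =>
    have h : A * (B * A) ^ k = (A * B) ^ k * A :=
      (SemiconjBy.pow_right (mul_assoc A B A).symm k).eq
    rw [pow_succ, pow_succ, ← mul_assoc, ← h, mul_assoc, trace_mul_comm A, mul_assoc]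

variable [RCLike 𝕜]

lemma trace_aeval_mul_comm (A B : Matrix m m 𝕜) (q : ℝ[X]) :
    trace (aeval (A * B) q) = trace (aeval (B * A) q) := by
  induction q using Polynomial.induction_on' with
  | add p q hp hq => simp only [map_add, trace_add, hp, hq]
  | monomial k c =>
    simp only [aeval_monomial, ← Algebra.smul_def, trace_smul, trace_pow_mul_comm]

lemma aeval_transpose (A : Matrix m m 𝕜) (q : ℝ[X]) : aeval Aᵀ q = (aeval A q)ᵀ := by
  apply MulOpposite.op_injective
  rw [← aeval_op_apply]
  exact aeval_algHom_apply (transposeAlgEquiv m ℝ 𝕜) A q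

lemma cfc_eq_aeval_of_eqOn {A : Matrix m m 𝕜} (hA : A.IsHermitian) {f : ℝ → ℝ} {q : ℝ[X]}
    (hq : (spectrum ℝ A).EqOn (fun x => q.eval x) f) : cfc f A = aeval A q := by
  rw [← cfc_polynomial q A hA.isSelfAdjoint, cfc_congr hq.symm]

lemma cfc_transpose (f : ℝ → ℝ) (A : Matrix m m 𝕜) : cfc f Aᵀ = (cfc f A)ᵀ := by
  by_cases hA : A.IsHermitian
  · obtain ⟨q, hq⟩ := Polynomial.exists_eqOn_of_finite f
      (A.finite_real_spectrum.union Aᵀ.finite_real_spectrum)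
    rw [cfc_eq_aeval_of_eqOn hA (hq.mono Set.subset_union_left),
      cfc_eq_aeval_of_eqOn hA.transpose (hq.mono Set.subset_union_right), aeval_transpose]
  · have hAt : ¬ IsSelfAdjoint Aᵀ := by
      rwa [← isHermitian_iff_isSelfAdjoint, isHermitian_transpose_iff]
    rw [cfc_apply_of_not_predicate _ hAt,
      cfc_apply_of_not_predicate _ (mt isHermitian_iff_isSelfAdjoint.mpr hA), transpose_zero]

lemma cfc_conjStarAlgAut (f : ℝ → ℝ) (A : Matrix m m 𝕜) (u : unitary (Matrix m m 𝕜)) :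
    cfc f (Unitary.conjStarAlgAut ℝ _ u A) = Unitary.conjStarAlgAut ℝ _ u (cfc f A) := by
  set φ := Unitary.conjStarAlgAut ℝ (Matrix m m 𝕜) u
  by_cases hA : IsSelfAdjoint A
  · exact (φ.toStarAlgHom.map_cfc f A (A.finite_real_spectrum.continuousOn _)
      ((continuous_const.mul continuous_id).mul continuous_const)).symm
  · have hφA : ¬ IsSelfAdjoint (φ A) := fun h => hA (φ.symm_apply_apply A ▸ h.map φ.symm)
    rw [cfc_apply_of_not_predicate _ hA, cfc_apply_of_not_predicate _ hφA, map_zero]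

lemma trace_conjStarAlgAut (A : Matrix m m 𝕜) (u : unitary (Matrix m m 𝕜)) :
    trace (Unitary.conjStarAlgAut ℝ _ u A) = trace A := by
  rw [Unitary.conjStarAlgAut_apply, trace_mul_cycle, Unitary.coe_star_mul_self, one_mul]

lemma trace_cfc_conjTranspose_mul_self (f : ℝ → ℝ) (X : Matrix m m 𝕜) :
    trace (cfc f (Xᴴ * X)) = trace (cfc f (X * Xᴴ)) := by
  obtain ⟨q, hq⟩ := Polynomial.exists_eqOn_of_finite f
    ((Xᴴ * X).finite_real_spectrum.union (X * Xᴴ).finite_real_spectrum)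
  rw [cfc_eq_aeval_of_eqOn (isHermitian_conjTranspose_mul_self X) (hq.mono Set.subset_union_left),
    cfc_eq_aeval_of_eqOn (isHermitian_mul_conjTranspose_self X) (hq.mono Set.subset_union_right),
    trace_aeval_mul_comm]

lemma PosDef.conjStarAlgAut {A : Matrix m m 𝕜} (hA : A.PosDef) (u : unitary (Matrix m m 𝕜)) :
    (Unitary.conjStarAlgAut ℝ _ u A).PosDef :=
  hA.mul_mul_conjTranspose_same (vecMul_injective_iff_isUnit.mpr (Unitary.toUnits u).isUnit)

end Matrix

variable {n : ℕ}

lemma matCFC_eq_cfc (f : ℝ → ℝ) (A : Matrix (Fin n) (Fin n) ℂ) : matCFC f A = cfc f A := by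
  by_cases hA : A.IsHermitian
  · rw [matCFC, dif_pos hA, hA.cfc_eq]
  · rw [matCFC, dif_neg hA, cfc_apply_of_not_predicate _ (mt isHermitian_iff_isSelfAdjoint.mpr hA)]

lemma mexp_transpose (A : Matrix (Fin n) (Fin n) ℂ) : mexp Aᵀ = (mexp A)ᵀ :=
  exp_transpose A

lemma mexp_conjStarAlgAut (A : Matrix (Fin n) (Fin n) ℂ) (u : unitary (Matrix (Fin n) (Fin n) ℂ)) :
    mexp (Unitary.conjStarAlgAut ℝ _ u A) = Unitary.conjStarAlgAut ℝ _ u (mexp A) := by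
  simpa only [Unitary.conjStarAlgAut_apply, mexp, Unitary.coe_star,
    inv_eq_right_inv (Unitary.coe_mul_star_self u)] using
    exp_conj (u : Matrix (Fin n) (Fin n) ℂ) A (Unitary.toUnits u).isUnit

lemma mpow_mul_mpow {A : Matrix (Fin n) (Fin n) ℂ} (hA : A.PosDef) (a b : ℝ) :
    mpow A a * mpow A b = mpow A (a + b) := by
  simp only [mpow, matCFC_eq_cfc]
  rw [← cfc_mul _ _ _ (A.finite_real_spectrum.continuousOn _)
    (A.finite_real_spectrum.continuousOn _)]
  refine cfc_congr fun x hx => (Real.rpow_add ?_ a b).symm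
  rw [hA.isHermitian.spectrum_real_eq_range_eigenvalues] at hx
  obtain ⟨i, rfl⟩ := hx
  exact hA.eigenvalues_pos i

lemma mpow_isHermitian (A : Matrix (Fin n) (Fin n) ℂ) (q : ℝ) : (mpow A q).IsHermitian := by
  rw [mpow, matCFC_eq_cfc, isHermitian_iff_isSelfAdjoint]
  exact cfc_predicate _ A

lemma trace_mpow_conjTranspose_mul_self (X : Matrix (Fin n) (Fin n) ℂ) (r : ℝ) :
    trace (mpow (Xᴴ * X) r) = trace (mpow (X * Xᴴ) r) := by
  simp only [mpow, matCFC_eq_cfc]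
  exact trace_cfc_conjTranspose_mul_self _ X

lemma trace_mpow_sandwich_comm {A B : Matrix (Fin n) (Fin n) ℂ} (hA : A.PosDef) (hB : B.PosDef)
    (a b r : ℝ) :
    trace (mpow (mpow A a * mpow B (2 * b) * mpow A a) r) =
      trace (mpow (mpow B b * mpow A (2 * a) * mpow B b) r) := by
  have hX : (mpow B b * mpow A a)ᴴ = mpow A a * mpow B b := by
    rw [conjTranspose_mul, (mpow_isHermitian A a).eq, (mpow_isHermitian B b).eq]
  have hXX : (mpow B b * mpow A a)ᴴ * (mpow B b * mpow A a) =
      mpow A a * mpow B (2 * b) * mpow A a := by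
    rw [hX, two_mul, ← mpow_mul_mpow hB]
    simp only [mul_assoc]
  have hXX' : (mpow B b * mpow A a) * (mpow B b * mpow A a)ᴴ =
      mpow B b * mpow A (2 * a) * mpow B b := by
    rw [hX, two_mul, ← mpow_mul_mpow hA]
    simp only [mul_assoc]
  rw [← hXX, ← hXX', trace_mpow_conjTranspose_mul_self]

noncomputable def pressureTrace (p α : ℝ) (A B : Matrix (Fin n) (Fin n) ℂ) : ℂ :=
  trace (mpow (mpow A ((1 - α) / p) * mpow B (2 * α / p) * mpow A ((1 - α) / p)) (p / 2))

noncomputable def pressureTraceInf (α : ℝ) (A B : Matrix (Fin n) (Fin n) ℂ) : ℂ :=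
  trace (mexp ((1 - α) • mlog A + α • mlog B))

section PressureTrace

variable (A B : Matrix (Fin n) (Fin n) ℂ) (u : unitary (Matrix (Fin n) (Fin n) ℂ))

lemma pressureTrace_conjStarAlgAut (p α : ℝ) :
    pressureTrace p α (Unitary.conjStarAlgAut ℝ _ u A) (Unitary.conjStarAlgAut ℝ _ u B) =
      pressureTrace p α A B := by
  simp only [pressureTrace, mpow, matCFC_eq_cfc, cfc_conjStarAlgAut, ← map_mul,
    trace_conjStarAlgAut]

lemma pressureTraceInf_conjStarAlgAut (α : ℝ) :
    pressureTraceInf α (Unitary.conjStarAlgAut ℝ _ u A) (Unitary.conjStarAlgAut ℝ _ u B) =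
      pressureTraceInf α A B := by
  simp only [pressureTraceInf, mlog, matCFC_eq_cfc, cfc_conjStarAlgAut, ← map_smul, ← map_add,
    mexp_conjStarAlgAut, trace_conjStarAlgAut]

lemma pressureTrace_transpose (p α : ℝ) : pressureTrace p α Aᵀ Bᵀ = pressureTrace p α A B := by
  simp only [pressureTrace, mpow, matCFC_eq_cfc, cfc_transpose, ← transpose_mul, trace_transpose,
    mul_assoc]

lemma pressureTraceInf_transpose (α : ℝ) : pressureTraceInf α Aᵀ Bᵀ = pressureTraceInf α A B := by
  simp only [pressureTraceInf, mlog, matCFC_eq_cfc, cfc_transpose, ← transpose_smul,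
    ← transpose_add, mexp_transpose, trace_transpose]

variable {A B}

lemma pressureTrace_swap (hA : A.PosDef) (hB : B.PosDef) (p α : ℝ) :
    pressureTrace p α A B = pressureTrace p (1 - α) B A := by
  rw [pressureTrace, pressureTrace, sub_sub_cancel, mul_div_assoc, mul_div_assoc]
  exact trace_mpow_sandwich_comm hA hB _ _ _

lemma pressureTraceInf_swap (α : ℝ) : pressureTraceInf α A B = pressureTraceInf (1 - α) B A := by
  rw [pressureTraceInf, pressureTraceInf, sub_sub_cancel, add_comm]

end PressureTrace

namespace Matrix.IsHermitian

variable {H : Matrix (Fin n) (Fin n) ℂ} (hH : H.IsHermitian)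
include hH

lemma star_mexp_I_smul (t : ℝ) :
    star (mexp ((Complex.I * t) • H)) = mexp ((-(Complex.I * t)) • H) := by
  rw [star_eq_conjTranspose, mexp, ← exp_conjTranspose, conjTranspose_smul, hH.eq, mexp]
  congr 2
  simp

lemma mexp_I_smul_mem_unitary (t : ℝ) : mexp ((Complex.I * t) • H) ∈ unitary _ := by
  have hc : Commute ((Complex.I * t) • H) ((-(Complex.I * t)) • H) :=
    ((Commute.refl H).smul_left _).smul_right _
  rw [Unitary.mem_iff, hH.star_mexp_I_smul, mexp, mexp, ← Matrix.exp_add_of_commute _ _ hc,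
    ← Matrix.exp_add_of_commute _ _ hc.symm, ← add_smul, ← add_smul, neg_add_cancel,
    add_neg_cancel, zero_smul, NormedSpace.exp_zero]
  exact ⟨rfl, rfl⟩

noncomputable def propagator (t : ℝ) : unitary (Matrix (Fin n) (Fin n) ℂ) :=
  ⟨mexp ((Complex.I * t) • H), hH.mexp_I_smul_mem_unitary t⟩

lemma coe_propagator (t : ℝ) :
    (hH.propagator t : Matrix (Fin n) (Fin n) ℂ) = mexp ((Complex.I * t) • H) := rfl

lemma stateT_eq_conjStarAlgAut (ω : Matrix (Fin n) (Fin n) ℂ) (t : ℝ) :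
    stateT H ω t = Unitary.conjStarAlgAut ℝ _ (star (hH.propagator t)) ω := by
  rw [Unitary.conjStarAlgAut_apply, Unitary.coe_star, star_star, coe_propagator,
    hH.star_mexp_I_smul, stateT]

lemma stateT_neg_eq_conjStarAlgAut (ω : Matrix (Fin n) (Fin n) ℂ) (t : ℝ) :
    stateT H ω (-t) = Unitary.conjStarAlgAut ℝ _ (hH.propagator t) ω := by
  rw [Unitary.conjStarAlgAut_apply, coe_propagator, hH.star_mexp_I_smul, stateT,
    Complex.ofReal_neg, mul_neg, neg_neg]

lemma conjStarAlgAut_stateT (ω : Matrix (Fin n) (Fin n) ℂ) (t : ℝ) :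
    Unitary.conjStarAlgAut ℝ _ (hH.propagator t) (stateT H ω t) = ω := by
  rw [hH.stateT_eq_conjStarAlgAut, ← Unitary.conjStarAlgAut_mul_apply, Unitary.mul_star_self,
    map_one, StarAlgEquiv.one_apply]

lemma stateT_posDef {ω : Matrix (Fin n) (Fin n) ℂ} (hω : ω.PosDef) (t : ℝ) :
    (stateT H ω t).PosDef := by
  rw [hH.stateT_eq_conjStarAlgAut]
  exact hω.conjStarAlgAut _

end Matrix.IsHermitian

section TimeReversal

variable {H ω : Matrix (Fin n) (Fin n) ℂ} {v : unitary (Matrix (Fin n) (Fin n) ℂ)}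

lemma conjStarAlgAut_transpose_mexp_smul (hvH : Unitary.conjStarAlgAut ℝ _ v Hᵀ = H) (c : ℂ) :
    Unitary.conjStarAlgAut ℝ _ v (mexp (c • H))ᵀ = mexp (c • H) := by
  rw [← mexp_transpose, ← mexp_conjStarAlgAut, transpose_smul, Unitary.conjStarAlgAut_apply,
    Matrix.mul_smul, Matrix.smul_mul, ← Unitary.conjStarAlgAut_apply (S := ℝ), hvH]

lemma conjStarAlgAut_transpose_stateT (hvH : Unitary.conjStarAlgAut ℝ _ v Hᵀ = H)
    (hvω : Unitary.conjStarAlgAut ℝ _ v ωᵀ = ω) (t : ℝ) :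
    Unitary.conjStarAlgAut ℝ _ v (stateT H ω t)ᵀ = stateT H ω (-t) := by
  rw [stateT, stateT, transpose_mul, transpose_mul, map_mul, map_mul, hvω,
    conjStarAlgAut_transpose_mexp_smul hvH, conjStarAlgAut_transpose_mexp_smul hvH,
    Complex.ofReal_neg, mul_neg, neg_neg, mul_assoc]

variable {F : ℝ → Matrix (Fin n) (Fin n) ℂ → Matrix (Fin n) (Fin n) ℂ → ℂ}
  (hconj : ∀ u α A B,
    F α (Unitary.conjStarAlgAut ℝ _ u A) (Unitary.conjStarAlgAut ℝ _ u B) = F α A B)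
include hconj

lemma apply_stateT_neg_of_timeReversal (htrans : ∀ α A B, F α Aᵀ Bᵀ = F α A B)
    (hvH : Unitary.conjStarAlgAut ℝ _ v Hᵀ = H) (hvω : Unitary.conjStarAlgAut ℝ _ v ωᵀ = ω)
    (t α : ℝ) : F α ω (stateT H ω (-t)) = F α ω (stateT H ω t) :=
  calc F α ω (stateT H ω (-t))
      = F α (Unitary.conjStarAlgAut ℝ _ v ωᵀ)
          (Unitary.conjStarAlgAut ℝ _ v (stateT H ω t)ᵀ) := by
        rw [hvω, conjStarAlgAut_transpose_stateT hvH hvω]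
    _ = F α ω (stateT H ω t) := by rw [hconj, htrans]

lemma apply_stateT_eq_one_sub_neg
    (hswap : ∀ α A B, A.PosDef → B.PosDef → F α A B = F (1 - α) B A)
    (hH : H.IsHermitian) (hω : ω.PosDef) (t α : ℝ) :
    F α ω (stateT H ω t) = F (1 - α) ω (stateT H ω (-t)) := by
  rw [hswap α _ _ hω (hH.stateT_posDef hω t), ← hconj (hH.propagator t),
    hH.conjStarAlgAut_stateT, ← hH.stateT_neg_eq_conjStarAlgAut]

lemma apply_stateT_symmetries_of_timeReversal (htrans : ∀ α A B, F α Aᵀ Bᵀ = F α A B)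
    (hswap : ∀ α A B, A.PosDef → B.PosDef → F α A B = F (1 - α) B A)
    (hH : H.IsHermitian) (hω : ω.PosDef)
    (hvH : Unitary.conjStarAlgAut ℝ _ v Hᵀ = H) (hvω : Unitary.conjStarAlgAut ℝ _ v ωᵀ = ω)
    (t α : ℝ) :
    F α ω (stateT H ω t) = F (1 - α) ω (stateT H ω t) ∧
      F α ω (stateT H ω t) = F α ω (stateT H ω (-t)) :=
  ⟨(apply_stateT_eq_one_sub_neg hconj hswap hH hω t α).trans
      (apply_stateT_neg_of_timeReversal hconj htrans hvH hvω t (1 - α)),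
    (apply_stateT_neg_of_timeReversal hconj htrans hvH hvω t α).symm⟩

end TimeReversal

theorem stmt8_general {n : ℕ} (H ω V : Matrix (Fin n) (Fin n) ℂ)
    (hH : H.IsHermitian) (hω : ω.PosDef)
    (hV : V * Vᴴ = 1) (hV' : Vᴴ * V = 1)
    (hTRIH : V * Hᵀ * Vᴴ = H) (hTRIω : V * ωᵀ * Vᴴ = ω) :
    (∀ p : ℝ, 0 < p → ∀ t α : ℝ,
      ePressure H ω p t α = ePressure H ω p t (1 - α) ∧
      ePressure H ω p t α = ePressure H ω p (-t) α) ∧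
    (∀ t α : ℝ,
      ePressureInf H ω t α = ePressureInf H ω t (1 - α) ∧
      ePressureInf H ω t α = ePressureInf H ω (-t) α) := by
  let v : unitary (Matrix (Fin n) (Fin n) ℂ) := ⟨V, hV', hV⟩
  have hvH : Unitary.conjStarAlgAut ℝ _ v Hᵀ = H := hTRIH
  have hvω : Unitary.conjStarAlgAut ℝ _ v ωᵀ = ω := hTRIω
  refine ⟨fun p _ t α => ?_, fun t α => ?_⟩
  · obtain ⟨h₁, h₂⟩ := apply_stateT_symmetries_of_timeReversal
      (fun u α A B => pressureTrace_conjStarAlgAut A B u p α)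
      (fun α A B => pressureTrace_transpose A B p α)
      (fun α _ _ hA hB => pressureTrace_swap hA hB p α) hH hω hvH hvω t α
    exact ⟨congrArg (fun z : ℂ => Real.log z.re) h₁, congrArg (fun z : ℂ => Real.log z.re) h₂⟩
  · obtain ⟨h₁, h₂⟩ := apply_stateT_symmetries_of_timeReversal
      (fun u α A B => pressureTraceInf_conjStarAlgAut A B u α)
      (fun α A B => pressureTraceInf_transpose A B α) (fun α _ _ _ _ => pressureTraceInf_swap α)
      hH hω hvH hvω t α
    exact ⟨congrArg (fun z : ℂ => Real.log z.re) h₁, congrArg (fun z : ℂ => Real.log z.re) h₂⟩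

/-- under time-reversal invariance, `e_{p,t}(α) = e_{p,t}(1-α)` and
`e_{p,t}(α) = e_{p,-t}(α)` for all `p ∈ (0,∞)`, `t`, `α`; the same identities hold
for `e_{∞,t}`. -/
theorem stmt8 {n : ℕ} (H ω V : Matrix (Fin n) (Fin n) ℂ)
    (hH : H.IsHermitian) (hω : ω.PosDef) (htr : ω.trace = 1)
    (hV : V * Vᴴ = 1) (hV' : Vᴴ * V = 1)
    (hTRIH : V * Hᵀ * Vᴴ = H) (hTRIω : V * ωᵀ * Vᴴ = ω) :
    (∀ p : ℝ, 0 < p → ∀ t α : ℝ,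
      ePressure H ω p t α = ePressure H ω p t (1 - α) ∧
      ePressure H ω p t α = ePressure H ω p (-t) α) ∧
    (∀ t α : ℝ,
      ePressureInf H ω t α = ePressureInf H ω t (1 - α) ∧
      ePressureInf H ω t α = ePressureInf H ω (-t) α) :=
  stmt8_general H ω V hH hω hV hV' hTRIH hTRIω
end
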